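/- For every positive integers n and m and every unit vector x ∈ ℝⁿ (‖x‖₂ = 1), the feature hashing matrix A satisfies E[ ( ‖Ax‖₂² − 1 )² ] ≤ 2/m, where the expectation is over the random choice of (h, σ). -/

import Mathlib

/-! Expanding the squares, ‖Ax‖² = ‖x‖² + ∑_{j,k} σ_j σ_k W_{jk} with
W_{jk} = [j ≠ k ∧ h j = h k] x_j x_k, so the error is a Rademacher chaos of order two.
Orthogonality of the Walsh characters σ ↦ ∏_{j ∈ S} σ_j over the uniform signs gives
E_σ[(∑ σ_j σ_k W_{jk})²] = 2 ∑_{j,k} W_{jk}², and a fixed pair j ≠ k collides with probability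
1/m, so the second moment is at most (2/m) (∑_j x_j²)² = 2/m. -/

open scoped BigOperators Classical
noncomputable section

namespace FH

def hashSq (n m : ℕ) (h : Fin n → Fin m) (σ : Fin n → Bool) (x : Fin n → ℝ) : ℝ :=
  ∑ i : Fin m, (∑ j : Fin n, (if h j = i then (if σ j then (1:ℝ) else -1) * x j else 0)) ^ 2

def hashPr (n m : ℕ) (P : (Fin n → Fin m) → (Fin n → Bool) → Prop) : ℝ :=
  ((Finset.univ.filter (fun p : (Fin n → Fin m) × (Fin n → Bool) => P p.1 p.2)).card : ℝ) /
    (Fintype.card ((Fin n → Fin m) × (Fin n → Bool)) : ℝ)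

def hashE (n m : ℕ) (f : (Fin n → Fin m) → (Fin n → Bool) → ℝ) : ℝ :=
  (∑ p : (Fin n → Fin m) × (Fin n → Bool), f p.1 p.2) /
    (Fintype.card ((Fin n → Fin m) × (Fin n → Bool)) : ℝ)

def l2 (n : ℕ) (x : Fin n → ℝ) : ℝ := Real.sqrt (∑ j, x j ^ 2)

def linf (n : ℕ) (x : Fin n → ℝ) : ℝ := ⨆ j, |x j|

def goodPr (n m : ℕ) (ε : ℝ) (x : Fin n → ℝ) : ℝ :=
  hashPr n m (fun h σ => |hashSq n m h σ x - l2 n x ^ 2| < ε * l2 n x ^ 2)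

def nuSet (m : ℕ) (ε δ : ℝ) : Set ℝ :=
  {ν | ν ∈ Set.Icc (0:ℝ) 1 ∧ ∀ n : ℕ, 0 < n → ∀ x : Fin n → ℝ, x ≠ 0 →
    linf n x ≤ ν * l2 n x → 1 - δ ≤ goodPr n m ε x}

def nu (m : ℕ) (ε δ : ℝ) : ℝ := sSup (nuSet m ε δ)

def lg (x : ℝ) : ℝ := Real.logb 2 x

open Finset
open scoped symmDiff

def boolSign (b : Bool) : ℝ := if b then 1 else -1

lemma boolSign_mul_self (b : Bool) : boolSign b * boolSign b = 1 := by
  cases b <;> norm_num [boolSign]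

lemma pair_eq_pair_iff {ι : Type*} [DecidableEq ι] {a b c d : ι} (hab : a ≠ b) :
    ({a, b} : Finset ι) = {c, d} ↔ (a = c ∧ b = d) ∨ (a = d ∧ b = c) := by
  constructor
  · intro h
    have ha : a ∈ ({c, d} : Finset ι) := h ▸ by simp
    have hb : b ∈ ({c, d} : Finset ι) := h ▸ by simp
    have hc : c ∈ ({a, b} : Finset ι) := h.symm ▸ by simp
    have hd : d ∈ ({a, b} : Finset ι) := h.symm ▸ by simp
    simp only [mem_insert, mem_singleton] at ha hb hc hd
    grind
  · rintro (⟨rfl, rfl⟩ | ⟨rfl, rfl⟩)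
    · rfl
    · exact pair_comm _ _

section Walsh

variable {ι : Type*} [DecidableEq ι]

def walsh (S : Finset ι) (σ : ι → Bool) : ℝ := ∏ j ∈ S, boolSign (σ j)

lemma walsh_mul_walsh (S T : Finset ι) (σ : ι → Bool) :
    walsh S σ * walsh T σ = walsh (S ∆ T) σ := by
  have hsq : (∏ j ∈ S ∩ T, boolSign (σ j)) * ∏ j ∈ S ∩ T, boolSign (σ j) = 1 := by
    rw [← prod_mul_distrib]
    simp [boolSign_mul_self]
  rw [walsh, walsh, walsh, Finset.symmDiff_def, prod_union disjoint_sdiff_sdiff,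
    ← prod_sdiff (inter_subset_left : S ∩ T ⊆ S), ← prod_sdiff (inter_subset_right : S ∩ T ⊆ T),
    sdiff_inter_self_left, sdiff_inter_self_right]
  linear_combination (∏ j ∈ S \ T, boolSign (σ j)) * (∏ j ∈ T \ S, boolSign (σ j)) * hsq

lemma sum_walsh [Fintype ι] (S : Finset ι) :
    ∑ σ : ι → Bool, walsh S σ = if S = ∅ then 2 ^ Fintype.card ι else 0 := by
  have hfactor : ∀ j, ∑ b : Bool, (if j ∈ S then boolSign b else 1) = if j ∈ S then 0 else 2 := by
    intro j
    split_ifs <;> norm_num [boolSign]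
  calc ∑ σ : ι → Bool, walsh S σ
      = ∑ σ : ι → Bool, ∏ j, if j ∈ S then boolSign (σ j) else 1 := by
        simp [walsh, prod_ite_mem]
    _ = ∏ j, ∑ b : Bool, if j ∈ S then boolSign b else 1 :=
        (Fintype.prod_sum fun j (b : Bool) => if j ∈ S then boolSign b else 1).symm
    _ = ∏ j, if j ∈ S then (0 : ℝ) else 2 := prod_congr rfl fun j _ => hfactor j
    _ = if S = ∅ then 2 ^ Fintype.card ι else 0 := by
        split_ifs with hS
        · simp [hS]
        · obtain ⟨j, hj⟩ := nonempty_iff_ne_empty.mpr hS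
          exact prod_eq_zero (mem_univ j) (if_pos hj)

lemma sum_walsh_mul_walsh [Fintype ι] (S T : Finset ι) :
    ∑ σ : ι → Bool, walsh S σ * walsh T σ = if S = T then 2 ^ Fintype.card ι else 0 := by
  simp only [walsh_mul_walsh, sum_walsh, ← bot_eq_empty, symmDiff_eq_bot]

lemma sum_boolSign_mul_four [Fintype ι] {a b c d : ι} (hab : a ≠ b) (hcd : c ≠ d) :
    ∑ σ : ι → Bool, boolSign (σ a) * boolSign (σ b) * (boolSign (σ c) * boolSign (σ d)) =
      if (a = c ∧ b = d) ∨ (a = d ∧ b = c) then 2 ^ Fintype.card ι else 0 := by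
  have := sum_walsh_mul_walsh {a, b} {c, d}
  simp only [walsh, prod_pair hab, prod_pair hcd] at this
  rw [this]
  exact if_congr (pair_eq_pair_iff hab) rfl rfl

end Walsh

section Chaos

variable {ι : Type*} [Fintype ι] [DecidableEq ι] {W : ι → ι → ℝ}

-- The equations on `b` come first so that the innermost sum over `b` collapses by `sum_ite_eq'`.
lemma sum_boolSign_chaos_term (hdiag : ∀ j, W j j = 0) (a b c d : ι) :
    ∑ σ : ι → Bool,
        boolSign (σ a) * boolSign (σ b) * W a b * (boolSign (σ c) * boolSign (σ d) * W c d) =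
      2 ^ Fintype.card ι * ((if b = d ∧ a = c then W a b * W c d else 0) +
        (if b = c ∧ a = d then W a b * W c d else 0)) := by
  by_cases hab : a = b
  · subst hab; simp [hdiag]
  by_cases hcd : c = d
  · subst hcd; simp [hdiag]
  calc _ = (∑ σ : ι → Bool, boolSign (σ a) * boolSign (σ b) * (boolSign (σ c) * boolSign (σ d))) *
        (W a b * W c d) := by
        rw [sum_mul]; exact sum_congr rfl fun σ _ => by ring
    _ = _ := by
        rw [sum_boolSign_mul_four hab hcd]
        split_ifs <;> grind

theorem sum_sq_boolSign_chaos (hdiag : ∀ j, W j j = 0) (hsymm : ∀ j k, W j k = W k j) :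
    ∑ σ : ι → Bool, (∑ j, ∑ k, boolSign (σ j) * boolSign (σ k) * W j k) ^ 2 =
      2 ^ Fintype.card ι * (2 * ∑ j, ∑ k, W j k ^ 2) := by
  simp only [sq, sum_mul, mul_sum]
  simp_rw [sum_comm (s := (univ : Finset (ι → Bool))), sum_boolSign_chaos_term hdiag, mul_add,
    sum_add_distrib, ← mul_sum]
  simp only [ite_and, sum_ite_eq', mem_univ, if_true]
  have hswap : ∑ j, ∑ k, W k j * W j k = ∑ j, ∑ k, W j k * W j k :=
    sum_congr rfl fun j _ => sum_congr rfl fun k _ => by rw [hsymm k j]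
  rw [hswap]
  ring

end Chaos

lemma sum_sq_sum_ite_eq {ι α : Type*} [Fintype ι] [Fintype α] [DecidableEq α] (h : ι → α)
    (a : ι → ℝ) :
    ∑ i, (∑ j, if h j = i then a j else 0) ^ 2 =
      ∑ j, ∑ k, if h j = h k then a j * a k else 0 := by
  simp_rw [sq, sum_mul_sum]
  rw [sum_comm]
  refine sum_congr rfl fun j _ => ?_
  rw [sum_comm]
  refine sum_congr rfl fun k _ => ?_
  by_cases hjk : h j = h k <;> simp [ite_mul, mul_ite, hjk]

section Hashing

variable {ι α : Type*} [DecidableEq ι] [DecidableEq α]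

lemma card_filter_apply_eq_apply [Fintype ι] [Fintype α] {j k : ι} (hjk : j ≠ k) :
    #{h : ι → α | h j = h k} = Fintype.card α ^ (Fintype.card ι - 1) := by
  rw [card_filter]
  calc ∑ h : ι → α, (if h j = h k then 1 else 0)
      = ∑ p : α × ({i // i ≠ k} → α), if p.2 ⟨j, hjk⟩ = p.1 then 1 else 0 :=
        Fintype.sum_equiv (Equiv.funSplitAt k α) _ _ fun h => rfl
    _ = ∑ _r : {i // i ≠ k} → α, 1 := by
        rw [Fintype.sum_prod_type, sum_comm]
        simp
    _ = Fintype.card α ^ (Fintype.card ι - 1) := by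
        simp [Fintype.card_subtype_compl]

def collisionWeight (h : ι → α) (x : ι → ℝ) (j k : ι) : ℝ :=
  if j ≠ k ∧ h j = h k then x j * x k else 0

lemma collisionWeight_self (h : ι → α) (x : ι → ℝ) (j : ι) : collisionWeight h x j j = 0 := by
  simp [collisionWeight]

lemma collisionWeight_comm (h : ι → α) (x : ι → ℝ) (j k : ι) :
    collisionWeight h x j k = collisionWeight h x k j := by
  simp only [collisionWeight, ne_comm, eq_comm (a := h j), mul_comm (x j)]

lemma sum_sq_sum_ite_eq_add_chaos [Fintype ι] [Fintype α] (h : ι → α) (σ : ι → Bool)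
    (x : ι → ℝ) :
    ∑ i, (∑ j, if h j = i then boolSign (σ j) * x j else 0) ^ 2 =
      ∑ j, x j ^ 2 + ∑ j, ∑ k, boolSign (σ j) * boolSign (σ k) * collisionWeight h x j k := by
  have hterm : ∀ j k, (if h j = h k then boolSign (σ j) * x j * (boolSign (σ k) * x k) else 0) =
      (if j = k then x j ^ 2 else 0) +
        boolSign (σ j) * boolSign (σ k) * collisionWeight h x j k := by
    intro j k
    by_cases hjk : j = k
    · subst hjk
      simp only [if_true, collisionWeight_self]
      linear_combination x j ^ 2 * boolSign_mul_self (σ j)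
    · by_cases hh : h j = h k
      · simp only [collisionWeight, hh, hjk, ne_eq, not_false_eq_true, and_self, if_true, if_false]
        ring
      · simp [hh, hjk, collisionWeight]
  simp_rw [sum_sq_sum_ite_eq, hterm, sum_add_distrib, sum_ite_eq, mem_univ, if_true]

lemma sum_sum_sum_collisionWeight_sq_le [Fintype ι] [Fintype α] (x : ι → ℝ) :
    ∑ h : ι → α, ∑ j, ∑ k, collisionWeight h x j k ^ 2 ≤
      Fintype.card α ^ (Fintype.card ι - 1) * (∑ j, x j ^ 2) ^ 2 := by
  set C : ℝ := Fintype.card α ^ (Fintype.card ι - 1)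
  have hpair : ∀ j k, ∑ h : ι → α, collisionWeight h x j k ^ 2 ≤ C * (x j ^ 2 * x k ^ 2) := by
    intro j k
    by_cases hjk : j = k
    · simp only [hjk, collisionWeight_self, ne_eq, OfNat.ofNat_ne_zero, not_false_eq_true,
        zero_pow, sum_const_zero]
      positivity
    · apply le_of_eq
      calc ∑ h : ι → α, collisionWeight h x j k ^ 2
          = ∑ h ∈ {h : ι → α | h j = h k}, (x j * x k) ^ 2 := by
            rw [sum_filter]
            exact sum_congr rfl fun h _ => by
              by_cases hh : h j = h k <;> simp [collisionWeight, hjk, hh]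
        _ = C * (x j ^ 2 * x k ^ 2) := by
            rw [sum_const, card_filter_apply_eq_apply hjk, nsmul_eq_mul]
            push_cast
            ring
  calc ∑ h : ι → α, ∑ j, ∑ k, collisionWeight h x j k ^ 2
      = ∑ j, ∑ k, ∑ h : ι → α, collisionWeight h x j k ^ 2 := by
        rw [sum_comm]
        exact sum_congr rfl fun j _ => sum_comm
    _ ≤ ∑ j, ∑ k, C * (x j ^ 2 * x k ^ 2) :=
        sum_le_sum fun j _ => sum_le_sum fun k _ => hpair j k
    _ = C * (∑ j, x j ^ 2) ^ 2 := by
        rw [sq (∑ j, x j ^ 2), sum_mul_sum, mul_sum]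
        simp_rw [mul_sum]

end Hashing

lemma sum_sq_hashSq_sub_one {n m : ℕ} (h : Fin n → Fin m) {x : Fin n → ℝ}
    (hx : ∑ j, x j ^ 2 = 1) :
    ∑ σ : Fin n → Bool, (hashSq n m h σ x - 1) ^ 2 =
      2 ^ n * (2 * ∑ j, ∑ k, collisionWeight h x j k ^ 2) := by
  have hchaos : ∀ σ, hashSq n m h σ x - 1 =
      ∑ j, ∑ k, boolSign (σ j) * boolSign (σ k) * collisionWeight h x j k := fun σ => by
    have hexpand := sum_sq_sum_ite_eq_add_chaos h σ x
    rw [hx] at hexpand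
    exact sub_eq_of_eq_add' hexpand
  simp_rw [hchaos]
  simpa only [Fintype.card_fin] using
    sum_sq_boolSign_chaos (collisionWeight_self h x) (collisionWeight_comm h x)

theorem second_moment_bound :
    ∀ n m : ℕ, 0 < n → 0 < m → ∀ x : Fin n → ℝ, l2 n x = 1 →
      hashE n m (fun h σ => (hashSq n m h σ x - 1) ^ 2) ≤ 2 / (m:ℝ) := by
  intro n m hn hm x hx
  have hx2 : ∑ j, x j ^ 2 = 1 := Real.sqrt_eq_one.mp hx
  have hcollide := sum_sum_sum_collisionWeight_sq_le (α := Fin m) x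
  rw [hx2, Fintype.card_fin, Fintype.card_fin, one_pow, mul_one] at hcollide
  have hcard : (Fintype.card ((Fin n → Fin m) × (Fin n → Bool)) : ℝ) = m ^ n * 2 ^ n := by
    simp
  have hm' : (0 : ℝ) < m := by exact_mod_cast hm
  rw [hashE, Fintype.sum_prod_type, hcard, div_le_div_iff₀ (by positivity) hm']
  simp_rw [sum_sq_hashSq_sub_one _ hx2]
  rw [← mul_sum, ← mul_sum]
  calc 2 ^ n * (2 * ∑ h : Fin n → Fin m, ∑ j, ∑ k, collisionWeight h x j k ^ 2) * m
      ≤ 2 ^ n * (2 * m ^ (n - 1)) * m := by gcongr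
    _ = 2 * (m ^ n * 2 ^ n) := by rw [← pow_sub_one_mul hn.ne' (m : ℝ)]; ring

end FH
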